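/- Let n ≥ 2 and let w_0, ..., w_{n-1} be real arc weights on the directed cycle on n vertices with total weight w = Σ_i w_i nonzero. Let W be the weighted distance matrix, L = (1/w)(I - P) with P the cyclic permutation matrix P_{i,(i+1) mod n} = 1, and α the vector with α_i = w_{(i-1) mod n}/w. Then W L + I = j α^T. -/

import Mathlib

open Matrix

open scoped Fin.NatCast Fin.CommRing in
lemma sum_range_n' {n : ℕ} [NeZero n] (w : Fin n → ℝ) (i : Fin n) :
    ∑ k ∈ Finset.range n, w (i + Fin.ofNat n k) = ∑ x, w x := by
  rw [← Fin.sum_univ_eq_sum_range (fun k => w (i + Fin.ofNat n k)) n]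
  simp only [Fin.ofNat_eq_cast, Fin.cast_val_eq_self]
  exact Fintype.sum_equiv (Equiv.addLeft i) _ _ (fun k => rfl)

open scoped Fin.NatCast Fin.CommRing in
lemma neg_one_cast' {n : ℕ} [NeZero n] (hn : 2 ≤ n) :
    ((n - 1 : ℕ) : Fin n) = -1 := by
  rw [Nat.cast_sub (by omega), Nat.cast_one, Fin.natCast_self, zero_sub]

open scoped Fin.NatCast Fin.CommRing in
lemma neg_one_val' {n : ℕ} [NeZero n] (hn : 2 ≤ n) :
    ((-1 : Fin n) : ℕ) = n - 1 := by
  rw [← neg_one_cast' hn, Fin.val_cast_of_lt (by omega)]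

open scoped Fin.NatCast Fin.CommRing in
lemma sum_range_pred {n : ℕ} [NeZero n] (hn : 2 ≤ n) (w : Fin n → ℝ) (i : Fin n) :
    ∑ k ∈ Finset.range (n - 1), w (i + Fin.ofNat n k) = (∑ x, w x) - w (i - 1) := by
  have h2 : ∑ k ∈ Finset.range (n - 1 + 1), w (i + Fin.ofNat n k) = ∑ x, w x := by
    rw [Nat.sub_add_cancel (by omega : 1 ≤ n)]; exact sum_range_n' w i
  rw [Finset.sum_range_succ] at h2
  have hc : i + Fin.ofNat n (n - 1) = i - 1 := by
    rw [Fin.ofNat_eq_cast, neg_one_cast' hn]; ring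
  rw [hc] at h2
  linarith

theorem stmt_10 {n : ℕ} [NeZero n] (hn : 2 ≤ n) (w : Fin n → ℝ)
    (hw : (∑ i, w i) ≠ 0)
    (W : Matrix (Fin n) (Fin n) ℝ)
    (hW : W = Matrix.of fun i j => ∑ k ∈ Finset.range ((j - i : Fin n) : ℕ), w (i + Fin.ofNat n k))
    (P : Matrix (Fin n) (Fin n) ℝ)
    (hP : P = Matrix.of fun i j => if j = i + 1 then (1 : ℝ) else 0)
    (L : Matrix (Fin n) (Fin n) ℝ) (hL : L = (∑ i, w i)⁻¹ • (1 - P))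
    (α : Fin n → ℝ) (hα : α = fun i => w (i - 1) / (∑ i, w i)) :
    W * L + 1 = vecMulVec (fun _ => 1) α := by
  set S := ∑ i, w i with hS
  have hWP : W * P = Matrix.of fun i j => W i (j - 1) := by
    ext i j
    rw [hP, Matrix.mul_apply]
    simp only [Matrix.of_apply, mul_ite, mul_one, mul_zero]
    have hiff : ∀ k : Fin n, (if j = k + 1 then W i k else 0)
        = (if k = j - 1 then W i k else 0) := fun k =>
      if_congr (by rw [eq_sub_iff_add_eq, eq_comm]) rfl rfl
    simp only [hiff, Finset.sum_ite_eq', Finset.mem_univ, if_pos]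
  rw [hL, mul_smul_comm, mul_sub, mul_one, hWP]
  ext i j
  simp only [Matrix.add_apply, Matrix.smul_apply, Matrix.sub_apply, Matrix.of_apply,
    Matrix.one_apply, vecMulVec_apply, smul_eq_mul, hα, hW]
  by_cases h : j = i
  · subst h
    have h1 : ((j - j : Fin n) : ℕ) = 0 := by simp
    have h2 : ((j - 1 - j : Fin n) : ℕ) = n - 1 := by
      have he : j - 1 - j = (-1 : Fin n) := by open scoped Fin.CommRing in ring
      rw [he, neg_one_val' hn]
    rw [h1, h2, sum_range_pred hn w j]
    simp only [if_pos rfl, Finset.range_zero, Finset.sum_empty]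
    field_simp
    simp only [if_true, mul_one, hS]
    ring
  · have hne : j - i ≠ 0 := fun hc => h (by rwa [sub_eq_zero] at hc)
    have hd : 1 ≤ ((j - i : Fin n) : ℕ) := by
      rcases Nat.eq_zero_or_pos ((j - i : Fin n) : ℕ) with h0 | h0
      · exact absurd (Fin.ext h0) hne
      · exact h0
    have h2 : ((j - 1 - i : Fin n) : ℕ) = ((j - i : Fin n) : ℕ) - 1 := by
      have he : j - 1 - i = (j - i) - 1 := by open scoped Fin.CommRing in ring
      have hxv : ((j - i - 1 : Fin n) : ℕ) = (n - ((1 : Fin n) : ℕ) + ((j - i : Fin n) : ℕ)) % n :=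
        congrArg Fin.val (Fin.sub_def (j - i) 1)
      have h1v : ((1 : Fin n) : ℕ) = 1 % n := Fin.val_one' n
      have hlt := (j - i).isLt
      rw [h1v, Nat.mod_eq_of_lt (show 1 < n by omega)] at hxv
      rw [show n - 1 + ((j - i : Fin n) : ℕ) = (((j - i : Fin n) : ℕ) - 1) + n by omega,
        Nat.add_mod_right, Nat.mod_eq_of_lt (by omega)] at hxv
      rw [he, hxv]
    have h3 : ((j - i : Fin n) : ℕ) = (((j - i : Fin n) : ℕ) - 1) + 1 := by omega
    rw [h2, h3, Finset.sum_range_succ]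
    have hc : i + Fin.ofNat n (((j - i : Fin n) : ℕ) - 1) = j - 1 := by
      open scoped Fin.NatCast Fin.CommRing in
      (rw [Fin.ofNat_eq_cast, Nat.cast_sub hd, Nat.cast_one, Fin.cast_val_eq_self]
       ring)
    rw [hc]
    rw [if_neg (fun hc => h hc.symm)]
    field_simp
    rw [Nat.add_sub_cancel]
    ring
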